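/- arXiv:2505.00164 — 6 statements merged into one kernel-verified Lean document; each statement's English description precedes it below -/
import Mathlib

section
/- Let w : ℝ → ℝ be a function taking nonnegative values, whose support is a finite subset of the half-open interval (0,1]. Suppose that for every x ∈ [1/2, 1] one has ∑_{y : x ≤ y ≤ 1} w(y)·y ≥ ∑_{y : 0 < y ≤ 1-x} w(y)·y (each sum ranging over the finitely many support points y of w in the indicated range). Then ∑_{y : 0 < y ≤ 1} w(y)·y·(1 − 2y) ≤ 0. -/
/-!
Since `y - 1/2 = ∫_{1/2}^{1} (𝟙[x ≤ y] - 𝟙[x ≤ 1 - y]) dx` for `y ∈ [0,1]`, the sum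
`∑ w(y)·y·(y - 1/2)` is the integral over `x ∈ (1/2, 1]` of the difference of the two weighted
masses in the hypothesis, which is nonnegative pointwise.
-/

open MeasureTheory Finset

lemma setIntegral_Ioc_indicator_Iic_one (a b t : ℝ) :
    ∫ x in Set.Ioc a b, (Set.Iic t).indicator (1 : ℝ → ℝ) x = max (min b t - a) 0 := by
  rw [integral_indicator_one measurableSet_Iic, measureReal_restrict_apply measurableSet_Iic,
    Set.inter_comm, Set.Ioc_inter_Iic, Real.volume_real_Ioc]

lemma integrableOn_Ioc_indicator_Iic_one (a b t : ℝ) :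
    IntegrableOn ((Set.Iic t).indicator (1 : ℝ → ℝ)) (Set.Ioc a b) :=
  (integrableOn_const measure_Ioc_lt_top.ne).indicator measurableSet_Iic

lemma sub_half_eq_setIntegral {y : ℝ} (hy : y ∈ Set.Icc 0 1) :
    y - 1 / 2 = ∫ x in Set.Ioc (1 / 2) 1,
      ((Set.Iic y).indicator (1 : ℝ → ℝ) x - (Set.Iic (1 - y)).indicator 1 x) := by
  rw [integral_sub (integrableOn_Ioc_indicator_Iic_one _ _ y)
      (integrableOn_Ioc_indicator_Iic_one _ _ (1 - y)), setIntegral_Ioc_indicator_Iic_one,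
    setIntegral_Ioc_indicator_Iic_one, min_eq_right hy.2, min_eq_right (by linarith [hy.1])]
  rcases le_total y (1 / 2) with hy' | hy'
  · rw [max_eq_right (by linarith), max_eq_left (by linarith)]
    ring
  · rw [max_eq_left (by linarith), max_eq_right (by linarith)]
    ring

lemma sum_mul_sub_half_eq_setIntegral (s : Finset ℝ) (m : ℝ → ℝ)
    (hs : ∀ y ∈ s, y ∈ Set.Icc 0 1) :
    ∑ y ∈ s, m y * (y - 1 / 2) =
      ∫ x in Set.Ioc (1 / 2) 1, (∑ y ∈ s with x ≤ y, m y - ∑ y ∈ s with y ≤ 1 - x, m y) := by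
  have hint (y : ℝ) : Integrable (fun x => m y *
      ((Set.Iic y).indicator (1 : ℝ → ℝ) x - (Set.Iic (1 - y)).indicator 1 x))
      (volume.restrict (Set.Ioc (1 / 2) 1)) :=
    ((integrableOn_Ioc_indicator_Iic_one _ _ y).sub
      (integrableOn_Ioc_indicator_Iic_one _ _ (1 - y))).const_mul _
  calc ∑ y ∈ s, m y * (y - 1 / 2)
      = ∑ y ∈ s, ∫ x in Set.Ioc (1 / 2) 1,
          m y * ((Set.Iic y).indicator (1 : ℝ → ℝ) x - (Set.Iic (1 - y)).indicator 1 x) := by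
        refine sum_congr rfl fun y hy => ?_
        rw [integral_const_mul, ← sub_half_eq_setIntegral (hs y hy)]
    _ = _ := by
        rw [← integral_finsetSum s fun y _ => hint y]
        congr 1 with x
        simp only [sum_filter, ← sum_sub_distrib, Set.indicator_apply, Set.mem_Iic,
          le_sub_comm (a := x), Pi.one_apply]
        refine sum_congr rfl fun y _ => ?_
        split_ifs <;> ring

open Classical in
theorem stmt_0_general (w : ℝ → ℝ)
    (hfin : (Function.support w).Finite)
    (hsupp : Function.support w ⊆ Set.Ioc 0 1)
    (hcond : ∀ x ∈ Set.Icc (1/2 : ℝ) 1,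
      ∑ y ∈ hfin.toFinset.filter (fun y => x ≤ y ∧ y ≤ 1), w y * y ≥
      ∑ y ∈ hfin.toFinset.filter (fun y => 0 < y ∧ y ≤ 1 - x), w y * y) :
    ∑ y ∈ hfin.toFinset.filter (fun y => 0 < y ∧ y ≤ 1), w y * y * (1 - 2 * y) ≤ 0 := by
  set s := hfin.toFinset
  have hs : ∀ y ∈ s, 0 < y ∧ y ≤ 1 := fun y hy => hsupp (hfin.mem_toFinset.mp hy)
  rw [filter_true_of_mem hs]
  have hmoment : 0 ≤ ∑ y ∈ s, w y * y * (y - 1 / 2) := by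
    rw [sum_mul_sub_half_eq_setIntegral s _ fun y hy => Set.Ioc_subset_Icc_self (hs y hy)]
    refine setIntegral_nonneg measurableSet_Ioc fun x hx => ?_
    have h := hcond x ⟨hx.1.le, hx.2⟩
    rw [filter_congr fun y hy => and_iff_left (hs y hy).2,
      filter_congr fun y hy => and_iff_right (hs y hy).1] at h
    linarith
  calc ∑ y ∈ s, w y * y * (1 - 2 * y) = -2 * ∑ y ∈ s, w y * y * (y - 1 / 2) := by
        rw [mul_sum]
        exact sum_congr rfl fun _ _ => by ring
    _ ≤ 0 := by linarith

open Classical in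
/-- Lemma 3.6 of the paper ("middle region" lemma): if `w : ℝ → ℝ` is nonnegative
with finite support contained in `(0,1]`, and for every `x ∈ [1/2,1]` the weighted
mass on `[x,1]` dominates the weighted mass on `(0,1-x]`, then
`∑ w(y)·y·(1-2y) ≤ 0`. -/
theorem stmt_0 (w : ℝ → ℝ) (hw : ∀ x, 0 ≤ w x)
    (hfin : (Function.support w).Finite)
    (hsupp : Function.support w ⊆ Set.Ioc 0 1)
    (hcond : ∀ x ∈ Set.Icc (1/2 : ℝ) 1,
      ∑ y ∈ hfin.toFinset.filter (fun y => x ≤ y ∧ y ≤ 1), w y * y ≥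
      ∑ y ∈ hfin.toFinset.filter (fun y => 0 < y ∧ y ≤ 1 - x), w y * y) :
    ∑ y ∈ hfin.toFinset.filter (fun y => 0 < y ∧ y ≤ 1), w y * y * (1 - 2 * y) ≤ 0 :=
  stmt_0_general w hfin hsupp hcond
end

section
/- Let V be a finite vertex set, G_A a graph on V, and β ∈ (0,1]. Let C_1, …, C_m ⊆ V together with nonnegative reals p_1, …, p_m summing to 1 be given, where each C_i is a vertex cover of G_A. For v ∈ V set c_v = ∑_{i : v ∈ C_i} p_i and w_v = 1 − (2 − β)·c_v. If X is a vertex cover of G_A that minimizes the total weight ∑_{v∈X} w_v among all vertex covers of G_A, then ∑_{v∈X} (1 − (2 − β)·c_v) ≤ (β/2)·∑_{v∈V} c_v. -/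
/-!
Randomized rounding. Pick the cover `C i` with probability `p i` and a threshold `u` uniform
in `(0, 1]`, and let `F a = β / (2 (1 - (2 - β) a))`. Keep a vertex `v` with `c v < 1/2` iff
`v ∈ C i` and `u ≤ F (c v)`, and a vertex with `c v ≥ 1/2` iff `v ∈ C i` or `u > F (1 - c v)`.
Since `F` is increasing on `(-∞, 1/2]` and `c x + c y ≥ 1` on every edge, the rounded set is
always a vertex cover, so its expected weight bounds the weight of `X`. A vertex with
`c v < 1/2` is kept with probability `c v · F (c v)`, which makes its expected weight exactly
`β/2 · c v`; for `c v ≥ 1/2` the expected weight falls short of `β/2 · c v` by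
`(2 - β) (2 c v - 1)² / (2 (1 - (2 - β) (1 - c v))) ≥ 0`.
-/

/-- `S` is a vertex cover of the graph `G`: every edge has an endpoint in `S`. -/
def IsVertexCover {V : Type*} (G : SimpleGraph V) (S : Finset V) : Prop :=
  ∀ ⦃u v : V⦄, G.Adj u v → u ∈ S ∨ v ∈ S

open MeasureTheory

theorem le_sum_mul_measureReal_of_forall_le_sum {Ω V : Type*} [MeasurableSpace Ω] [Fintype V]
    (μ : Measure Ω) [IsProbabilityMeasure μ] (w : V → ℝ) (Z : Ω → Finset V)
    (hZ : ∀ v, MeasurableSet {ω | v ∈ Z ω}) {a : ℝ} (ha : ∀ ω, a ≤ ∑ v ∈ Z ω, w v) :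
    a ≤ ∑ v, w v * μ.real {ω | v ∈ Z ω} := by
  classical
  have hint : ∀ v, Integrable ({ω | v ∈ Z ω}.indicator fun _ => w v) μ :=
    fun v => (integrable_const _).indicator (hZ v)
  have hsum : ∀ ω, ∑ v ∈ Z ω, w v = ∑ v, {ω | v ∈ Z ω}.indicator (fun _ => w v) ω := by
    intro ω
    simp [Set.indicator_apply, Finset.sum_ite_mem]
  calc a = ∫ _, a ∂μ := by simp
    _ ≤ ∫ ω, ∑ v, {ω | v ∈ Z ω}.indicator (fun _ => w v) ω ∂μ :=
        integral_mono (integrable_const _) (integrable_finsetSum _ fun v _ => hint v)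
          fun ω => (ha ω).trans (hsum ω).le
    _ = ∑ v, w v * μ.real {ω | v ∈ Z ω} := by
        rw [integral_finsetSum _ fun v _ => hint v]
        simp [integral_indicator_const _ (hZ _), mul_comm]

instance : IsProbabilityMeasure (volume.restrict (Set.Ioc (0 : ℝ) 1)) :=
  ⟨by simp⟩

theorem measureReal_restrict_Ioc_zero_one_Iic {a : ℝ} (ha₀ : 0 ≤ a) (ha₁ : a ≤ 1) :
    (volume.restrict (Set.Ioc (0 : ℝ) 1)).real (Set.Iic a) = a := by
  rw [measureReal_restrict_apply' measurableSet_Ioc, Set.Iic_inter_Ioc_of_le ha₁,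
    Real.volume_real_Ioc_of_le ha₀, sub_zero]

theorem measureReal_restrict_Ioc_zero_one_Ioi {a : ℝ} (ha₀ : 0 ≤ a) (ha₁ : a ≤ 1) :
    (volume.restrict (Set.Ioc (0 : ℝ) 1)).real (Set.Ioi a) = 1 - a := by
  rw [measureReal_restrict_apply' measurableSet_Ioc, Set.inter_comm, Set.Ioc_inter_Ioi,
    sup_eq_right.2 ha₀, Real.volume_real_Ioc_of_le ha₁]

section CoverDistribution

variable {V ι : Type*} [Fintype ι] [DecidableEq V] (C : ι → Finset V) (p : ι → ℝ)

def coverProb (v : V) : ℝ := ∑ i, if v ∈ C i then p i else 0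

variable {C p}

theorem sum_ite_mem_zero_eq_one_sub_coverProb (hpsum : ∑ i, p i = 1) (v : V) :
    ∑ i, (if v ∈ C i then 0 else p i) = 1 - coverProb C p v := by
  rw [coverProb, ← hpsum, ← Finset.sum_sub_distrib]
  exact Finset.sum_congr rfl fun i _ => by split_ifs <;> ring

theorem one_le_coverProb_add_coverProb {G : SimpleGraph V} (hp : ∀ i, 0 ≤ p i)
    (hpsum : ∑ i, p i = 1) (hC : ∀ i, IsVertexCover G (C i)) {x y : V} (hxy : G.Adj x y) :
    1 ≤ coverProb C p x + coverProb C p y := by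
  rw [coverProb, coverProb, ← Finset.sum_add_distrib, ← hpsum]
  refine Finset.sum_le_sum fun i _ => ?_
  rcases hC i hxy with h | h <;> split_ifs <;> linarith [hp i]

end CoverDistribution

noncomputable def roundingThreshold (β a : ℝ) : ℝ := β / (2 * (1 - (2 - β) * a))

section Threshold

variable {β a b : ℝ}

theorem le_two_mul_one_sub_mul (hβ₂ : β ≤ 2) (ha : a ≤ 1 / 2) : β ≤ 2 * (1 - (2 - β) * a) := by
  nlinarith

theorem roundingThreshold_nonneg (hβ₀ : 0 < β) (hβ₂ : β ≤ 2) (ha : a ≤ 1 / 2) :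
    0 ≤ roundingThreshold β a :=
  div_nonneg hβ₀.le (hβ₀.le.trans (le_two_mul_one_sub_mul hβ₂ ha))

theorem roundingThreshold_le_one (hβ₀ : 0 < β) (hβ₂ : β ≤ 2) (ha : a ≤ 1 / 2) :
    roundingThreshold β a ≤ 1 :=
  div_le_one_of_le₀ (le_two_mul_one_sub_mul hβ₂ ha) (hβ₀.le.trans (le_two_mul_one_sub_mul hβ₂ ha))

theorem roundingThreshold_le_roundingThreshold (hβ₀ : 0 < β) (hβ₂ : β ≤ 2) (hab : a ≤ b)
    (hb : b ≤ 1 / 2) : roundingThreshold β a ≤ roundingThreshold β b :=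
  div_le_div_of_nonneg_left hβ₀.le (hβ₀.trans_le (le_two_mul_one_sub_mul hβ₂ hb))
    (by nlinarith)

end Threshold

section ThresholdRounding

variable {V : Type*} [Fintype V] [DecidableEq V]

noncomputable def thresholdRounding (β : ℝ) (c : V → ℝ) (S : Finset V) (u : ℝ) : Finset V :=
  Finset.univ.filter fun v =>
    if c v < 1 / 2 then v ∈ S ∧ u ≤ roundingThreshold β (c v)
    else v ∈ S ∨ roundingThreshold β (1 - c v) < u

variable {β : ℝ} {c : V → ℝ} {S : Finset V}

theorem isVertexCover_thresholdRounding {G : SimpleGraph V} (hβ₀ : 0 < β) (hβ₂ : β ≤ 2)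
    (hc : ∀ ⦃x y⦄, G.Adj x y → 1 ≤ c x + c y) (hS : IsVertexCover G S) (u : ℝ) :
    IsVertexCover G (thresholdRounding β c S u) := by
  have of_mem_left : ∀ ⦃x y⦄, G.Adj x y → x ∈ S →
      x ∈ thresholdRounding β c S u ∨ y ∈ thresholdRounding β c S u := by
    intro x y hxy hx
    simp only [thresholdRounding, Finset.mem_filter, Finset.mem_univ, true_and]
    by_cases hcx : c x < 1 / 2
    · by_cases hu : u ≤ roundingThreshold β (c x)
      · exact .inl (by rw [if_pos hcx]; exact ⟨hx, hu⟩)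
      · have hcy : ¬ c y < 1 / 2 := by linarith [hc hxy]
        have : roundingThreshold β (1 - c y) ≤ roundingThreshold β (c x) :=
          roundingThreshold_le_roundingThreshold hβ₀ hβ₂ (by linarith [hc hxy]) hcx.le
        exact .inr (by rw [if_neg hcy]; exact .inr (by linarith))
    · exact .inl (by rw [if_neg hcx]; exact .inl hx)
  intro x y hxy
  rcases hS hxy with hx | hy
  · exact of_mem_left hxy hx
  · exact (of_mem_left hxy.symm hy).symm

theorem setOf_mem_thresholdRounding (v : V) :
    {u | v ∈ thresholdRounding β c S u} =
      if c v < 1 / 2 then (if v ∈ S then Set.Iic (roundingThreshold β (c v)) else ∅)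
      else (if v ∈ S then Set.univ else Set.Ioi (roundingThreshold β (1 - c v))) := by
  ext u
  simp only [thresholdRounding, Finset.mem_filter, Finset.mem_univ, true_and, Set.mem_ofPred_eq]
  split_ifs <;> simp_all

theorem measurableSet_setOf_mem_thresholdRounding (v : V) :
    MeasurableSet {u | v ∈ thresholdRounding β c S u} := by
  rw [setOf_mem_thresholdRounding]
  split_ifs
  exacts [measurableSet_Iic, .empty, .univ, measurableSet_Ioi]

theorem measureReal_setOf_mem_thresholdRounding (hβ₀ : 0 < β) (hβ₂ : β ≤ 2) (v : V) :
    (volume.restrict (Set.Ioc (0 : ℝ) 1)).real {u | v ∈ thresholdRounding β c S u} =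
      if c v < 1 / 2 then (if v ∈ S then roundingThreshold β (c v) else 0)
      else 1 - (if v ∈ S then 0 else roundingThreshold β (1 - c v)) := by
  rw [setOf_mem_thresholdRounding]
  by_cases hcv : c v < 1 / 2
  · simp only [hcv, if_true]
    split_ifs
    · exact measureReal_restrict_Ioc_zero_one_Iic (roundingThreshold_nonneg hβ₀ hβ₂ hcv.le)
        (roundingThreshold_le_one hβ₀ hβ₂ hcv.le)
    · simp
  · have h : 1 - c v ≤ 1 / 2 := by linarith
    simp only [hcv, if_false]
    split_ifs
    · simp
    · exact measureReal_restrict_Ioc_zero_one_Ioi (roundingThreshold_nonneg hβ₀ hβ₂ h)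
        (roundingThreshold_le_one hβ₀ hβ₂ h)

end ThresholdRounding

noncomputable def roundingProb (β a : ℝ) : ℝ :=
  if a < 1 / 2 then a * roundingThreshold β a else 1 - (1 - a) * roundingThreshold β (1 - a)

theorem sum_mul_measureReal_setOf_mem_thresholdRounding {V ι : Type*} [Fintype V]
    [DecidableEq V] [Fintype ι] {C : ι → Finset V} {p : ι → ℝ} {β : ℝ} (hβ₀ : 0 < β)
    (hβ₂ : β ≤ 2) (hpsum : ∑ i, p i = 1) (v : V) :
    ∑ i, p i * (volume.restrict (Set.Ioc (0 : ℝ) 1)).real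
        {u | v ∈ thresholdRounding β (coverProb C p) (C i) u} =
      roundingProb β (coverProb C p v) := by
  simp only [measureReal_setOf_mem_thresholdRounding hβ₀ hβ₂, roundingProb]
  by_cases hcv : coverProb C p v < 1 / 2
  · simp only [if_pos hcv, mul_ite, mul_zero]
    rw [coverProb, Finset.sum_mul]
    simp only [ite_mul, zero_mul]
  · simp only [if_neg hcv, mul_sub, mul_one, Finset.sum_sub_distrib, hpsum, mul_ite, mul_zero]
    rw [← sum_ite_mem_zero_eq_one_sub_coverProb hpsum, Finset.sum_mul]
    simp only [ite_mul, zero_mul]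

theorem mul_roundingProb_le {β : ℝ} (hβ₀ : 0 < β) (hβ₂ : β ≤ 2) (a : ℝ) :
    (1 - (2 - β) * a) * roundingProb β a ≤ β / 2 * a := by
  rw [roundingProb]
  split_ifs with ha
  · have hD : 0 < 1 - (2 - β) * a := by nlinarith
    refine le_of_eq ?_
    rw [roundingThreshold]
    field_simp
  · have hD : 0 < 1 - (2 - β) * (1 - a) := by nlinarith
    have h : β / 2 * a - (1 - (2 - β) * a) * (1 - (1 - a) * roundingThreshold β (1 - a)) =
        (2 - β) * (2 * a - 1) ^ 2 / (2 * (1 - (2 - β) * (1 - a))) := by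
      rw [roundingThreshold]
      field_simp
      ring
    have : 0 ≤ (2 - β) * (2 * a - 1) ^ 2 / (2 * (1 - (2 - β) * (1 - a))) := by
      have : 0 ≤ 2 - β := by linarith
      positivity
    linarith

theorem stmt_1_general {V : Type*} [Fintype V] [DecidableEq V]
    (G_A : SimpleGraph V) (β : ℝ) (hβ : β ∈ Set.Ioc (0 : ℝ) 1)
    (m : ℕ) (C : Fin m → Finset V) (p : Fin m → ℝ)
    (hp : ∀ i, 0 ≤ p i) (hpsum : ∑ i, p i = 1)
    (hC : ∀ i, IsVertexCover G_A (C i))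
    (c : V → ℝ) (hc : ∀ v, c v = ∑ i, if v ∈ C i then p i else 0)
    (X : Finset V)
    (hXmin : ∀ Y : Finset V, IsVertexCover G_A Y →
      ∑ v ∈ X, (1 - (2 - β) * c v) ≤ ∑ v ∈ Y, (1 - (2 - β) * c v)) :
    ∑ v ∈ X, (1 - (2 - β) * c v) ≤ (β / 2) * ∑ v : V, c v := by
  obtain ⟨hβ₀, hβ₁⟩ := hβ
  have hβ₂ : β ≤ 2 := by linarith
  obtain rfl : c = coverProb C p := funext hc
  set w : V → ℝ := fun v => 1 - (2 - β) * coverProb C p v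
  set μ := volume.restrict (Set.Ioc (0 : ℝ) 1)
  have hround (i : Fin m) : ∑ v ∈ X, w v ≤
      ∑ v, w v * μ.real {u | v ∈ thresholdRounding β (coverProb C p) (C i) u} :=
    le_sum_mul_measureReal_of_forall_le_sum μ w _ measurableSet_setOf_mem_thresholdRounding
      fun u => hXmin _ <| isVertexCover_thresholdRounding hβ₀ hβ₂
        (fun _ _ => one_le_coverProb_add_coverProb hp hpsum hC) (hC i) u
  calc ∑ v ∈ X, w v = ∑ i, p i * ∑ v ∈ X, w v := by rw [← Finset.sum_mul, hpsum, one_mul]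
    _ ≤ ∑ i, p i * ∑ v, w v * μ.real {u | v ∈ thresholdRounding β (coverProb C p) (C i) u} :=
        Finset.sum_le_sum fun i _ => mul_le_mul_of_nonneg_left (hround i) (hp i)
    _ = ∑ v, w v * ∑ i, p i * μ.real {u | v ∈ thresholdRounding β (coverProb C p) (C i) u} := by
        simp only [Finset.mul_sum]
        rw [Finset.sum_comm]
        exact Finset.sum_congr rfl fun v _ => Finset.sum_congr rfl fun i _ => by ring
    _ = ∑ v, w v * roundingProb β (coverProb C p v) := by
        simp only [μ, sum_mul_measureReal_setOf_mem_thresholdRounding hβ₀ hβ₂ hpsum]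
    _ ≤ ∑ v, β / 2 * coverProb C p v :=
        Finset.sum_le_sum fun v _ => mul_roundingProb_le hβ₀ hβ₂ _
    _ = β / 2 * ∑ v, coverProb C p v := (Finset.mul_sum ..).symm

/-- Lemma 3.5 of the paper (vertex-cover-weight lemma), stated for a finitely
supported distribution `(C i, p i)` over vertex covers of `G_A`:
if `c v` is the probability that `v` lies in the random cover, weights are
`w v = 1 - (2-β)·c v`, and `X` is a minimum-weight vertex cover of `G_A`, then
`∑_{v∈X} (1 - (2-β) c_v) ≤ (β/2) ∑_{v∈V} c_v`. -/
theorem stmt_1 {V : Type*} [Fintype V] [DecidableEq V]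
    (G_A : SimpleGraph V) (β : ℝ) (hβ : β ∈ Set.Ioc (0 : ℝ) 1)
    (m : ℕ) (C : Fin m → Finset V) (p : Fin m → ℝ)
    (hp : ∀ i, 0 ≤ p i) (hpsum : ∑ i, p i = 1)
    (hC : ∀ i, IsVertexCover G_A (C i))
    (c : V → ℝ) (hc : ∀ v, c v = ∑ i, if v ∈ C i then p i else 0)
    (X : Finset V) (hX : IsVertexCover G_A X)
    (hXmin : ∀ Y : Finset V, IsVertexCover G_A Y →
      ∑ v ∈ X, (1 - (2 - β) * c v) ≤ ∑ v ∈ Y, (1 - (2 - β) * c v)) :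
    ∑ v ∈ X, (1 - (2 - β) * c v) ≤ (β / 2) * ∑ v : V, c v :=
  stmt_1_general G_A β hβ m C p hp hpsum hC c hc X hXmin
end

section
/- Let V be a finite vertex set, G_A a graph on V, and β ∈ (0,1]. Let H_1, …, H_m be graphs on V together with nonnegative reals p_1, …, p_m summing to 1, and for each i let C_i be a minimum vertex cover of the union graph G_A ∪ H_i (so |C_i| = τ(G_A ∪ H_i)). For v ∈ V set c_v = ∑_{i : v ∈ C_i} p_i and w_v = 1 − (2 − β)·c_v. If X is a vertex cover of G_A minimizing ∑_{v∈X} w_v among all vertex covers of G_A, then ∑_i p_i · ( |X| + (2 − β)·τ(H_i[V∖X]) ) ≤ (2 − β/2) · ∑_i p_i · τ(G_A ∪ H_i). -/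
/-- `τ(G)`: the minimum cardinality of a vertex cover of `G`. -/
noncomputable def tau {V : Type*} [Fintype V] (G : SimpleGraph V) : ℕ :=
  sInf {n : ℕ | ∃ S : Finset V, IsVertexCover G S ∧ S.card = n}

/-- `G[V∖X]`: the subgraph of `G` induced on the complement of `X`. -/
def inducedOutside {V : Type*} (G : SimpleGraph V) (X : Finset V) : SimpleGraph V where
  Adj u v := G.Adj u v ∧ u ∉ X ∧ v ∉ X
  symm := by
    constructor
    intro u v h
    exact ⟨h.1.symm, h.2.2, h.2.1⟩
  loopless := by
    constructor
    intro v h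
    exact G.loopless.irrefl v h.1

/-!
Each `C i \ X` covers `H i` outside `X`, so the left-hand side is at most
`w(X) + (2-β)·∑ᵢ pᵢ|Cᵢ|`, where `w(X) = ∑_{v∈X} (1 - (2-β)c_v)` and `∑ᵢ pᵢ|Cᵢ| = ∑_v c_v`. It
remains to show `w(X) ≤ (β/2)·∑_v c_v`.

Since every `Cᵢ` covers `G_A`, `c` is a fractional vertex cover of `G_A`, and for every `i` and
every threshold `θ` the set `(Cᵢ ∩ {c ≥ θ}) ∪ {c > 1 - θ}` is a vertex cover of `G_A`, hence has
weight at least `w(X)`. Draw `i` with probabilities `pᵢ` and `θ ≤ 1/2` with distribution function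
`F(x) = (β/2) / (1 - (2-β)x)`. A vertex with `c ≤ 1/2` then lies in the random cover with
probability `c·F(c)`, and contributes exactly `(β/2)c` to the expected weight; a vertex with
`c > 1/2` lies in it with probability `1 - (1-c)F(1-c)`, and contributes `(β/2)c` minus a
multiple of `(2c-1)²`. Only the values of `F` at the points `min(c_v, 1 - c_v)` and `1/2` enter,
so a discrete distribution on these points with the same distribution function there suffices.
-/

open Finset

section

variable {V ι : Type*}

lemma tau_le_card [Fintype V] {G : SimpleGraph V} {S : Finset V} (h : IsVertexCover G S) :
    tau G ≤ #S :=
  Nat.sInf_le ⟨S, h, rfl⟩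

lemma IsVertexCover.mono {G G' : SimpleGraph V} {S : Finset V} (hle : G ≤ G')
    (h : IsVertexCover G' S) : IsVertexCover G S :=
  fun _ _ huv => h (hle huv)

lemma tau_inducedOutside_add_card_inter_le [Fintype V] [DecidableEq V] {H : SimpleGraph V}
    {C : Finset V} (hC : IsVertexCover H C) (X : Finset V) :
    tau (inducedOutside H X) + #(C ∩ X) ≤ #C := by
  have hcover : IsVertexCover (inducedOutside H X) (C \ X) := fun u v ⟨huv, hu, hv⟩ =>
    (hC huv).imp (fun h => mem_sdiff.mpr ⟨h, hu⟩) (fun h => mem_sdiff.mpr ⟨h, hv⟩)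
  calc tau (inducedOutside H X) + #(C ∩ X) ≤ #(C \ X) + #(C ∩ X) := by
        gcongr; exact tau_le_card hcover
    _ = #C := card_sdiff_add_card_inter C X

lemma le_sum_mul_sum_ite_of_forall_le [Fintype V] [DecidableEq V] {κ : Type*} (s : Finset κ)
    (r : κ → ℝ) (hr0 : ∀ k ∈ s, 0 ≤ r k) (hr1 : ∑ k ∈ s, r k = 1) (Y : κ → Finset V)
    (w : V → ℝ) {a : ℝ} (h : ∀ k ∈ s, a ≤ ∑ v ∈ Y k, w v) :
    a ≤ ∑ v, w v * ∑ k ∈ s, if v ∈ Y k then r k else 0 := by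
  have hY : ∀ k, ∑ v ∈ Y k, w v = ∑ v, if v ∈ Y k then w v else 0 := fun k => by
    rw [sum_ite_mem, univ_inter]
  calc a = ∑ k ∈ s, r k * a := by rw [← sum_mul, hr1, one_mul]
    _ ≤ ∑ k ∈ s, r k * ∑ v ∈ Y k, w v :=
        sum_le_sum fun k hk => mul_le_mul_of_nonneg_left (h k hk) (hr0 k hk)
    _ = ∑ v, w v * ∑ k ∈ s, if v ∈ Y k then r k else 0 := by
        simp_rw [hY, mul_sum, mul_ite, mul_zero, mul_comm (w _)]
        exact sum_comm

theorem Finset.exists_nonneg_sum_filter_le_eq {α : Type*} [LinearOrder α] (Θ : Finset α)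
    (F : α → ℝ) (hF0 : ∀ x ∈ Θ, 0 ≤ F x) (hF : MonotoneOn F Θ) :
    ∃ μ : α → ℝ, (∀ θ ∈ Θ, 0 ≤ μ θ) ∧ ∀ x ∈ Θ, ∑ θ ∈ Θ with θ ≤ x, μ θ = F x := by
  induction Θ using Finset.induction_on_max with
  | empty => exact ⟨0, by simp, by simp⟩
  | insert a s hlt ih =>
    obtain ⟨μ, hμ0, hμ⟩ := ih (fun x hx => hF0 x (mem_insert_of_mem hx))
      (hF.mono (subset_insert a s))
    have has : a ∉ s := fun h => lt_irrefl a (hlt a h)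
    have hsum_s : ∑ θ ∈ s, μ θ ≤ F a := by
      rcases s.eq_empty_or_nonempty with rfl | hne
      · simpa using hF0 a (mem_insert_self a ∅)
      · have hmax := hμ _ (s.max'_mem hne)
        rw [filter_true_of_mem fun θ hθ => s.le_max' θ hθ] at hmax
        rw [hmax]
        exact hF (mem_insert_of_mem (s.max'_mem hne)) (mem_insert_self a s)
          (hlt _ (s.max'_mem hne)).le
    have hsame : ∀ t ⊆ s,
        ∑ θ ∈ t, Function.update μ a (F a - ∑ θ ∈ s, μ θ) θ = ∑ θ ∈ t, μ θ :=
      fun t ht => sum_congr rfl fun θ hθ =>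
        Function.update_of_ne (ne_of_mem_of_not_mem (ht hθ) has) _ _
    -- the new maximum `a` carries the missing mass `F a - F (max s)`
    refine ⟨Function.update μ a (F a - ∑ θ ∈ s, μ θ), ?_, ?_⟩
    · intro θ hθ
      rcases mem_insert.mp hθ with rfl | hθ
      · simpa using hsum_s
      · rw [Function.update_of_ne (ne_of_mem_of_not_mem hθ has)]
        exact hμ0 θ hθ
    · intro x hx
      rcases mem_insert.mp hx with rfl | hx
      · rw [filter_true_of_mem fun θ hθ => ?_, sum_insert has, hsame s subset_rfl]
        · simp
        · rcases mem_insert.mp hθ with rfl | hθ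
          exacts [le_rfl, (hlt θ hθ).le]
      · rw [filter_insert, if_neg (not_le.mpr (hlt x hx)), hsame _ (filter_subset _ _), hμ x hx]

section FractionalCover

variable [Fintype ι] [DecidableEq V] {p : ι → ℝ} {C : ι → Finset V} {c : V → ℝ}

lemma sum_mul_card_inter_eq_sum (hc : ∀ v, c v = ∑ i, if v ∈ C i then p i else 0)
    (S : Finset V) : ∑ i, p i * #(C i ∩ S) = ∑ v ∈ S, c v := by
  have hcard : ∀ i, (#(C i ∩ S) : ℝ) = ∑ v ∈ S, if v ∈ C i then 1 else 0 := fun i => by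
    rw [← natCast_card_filter, filter_mem_eq_inter, inter_comm]
  simp_rw [hcard, mul_sum, hc, mul_ite, mul_one, mul_zero]
  exact sum_comm

lemma one_le_add_of_forall_isVertexCover {G : SimpleGraph V} (hp : ∀ i, 0 ≤ p i)
    (hpsum : ∑ i, p i = 1) (hC : ∀ i, IsVertexCover G (C i))
    (hc : ∀ v, c v = ∑ i, if v ∈ C i then p i else 0) {u v : V} (huv : G.Adj u v) :
    1 ≤ c u + c v := by
  rw [hc, hc, ← sum_add_distrib, ← hpsum]
  refine sum_le_sum fun i _ => ?_
  rcases hC i huv with h | h <;> by_cases h' : u ∈ C i <;> by_cases h'' : v ∈ C i <;> simp_all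

noncomputable def thresholdRound [Fintype V] (C : Finset V) (c : V → ℝ) (θ : ℝ) : Finset V :=
  {v | (v ∈ C ∧ θ ≤ c v) ∨ 1 - θ < c v}

lemma isVertexCover_thresholdRound [Fintype V] {G : SimpleGraph V} {C : Finset V}
    (hC : IsVertexCover G C) (hc : ∀ ⦃u v⦄, G.Adj u v → 1 ≤ c u + c v) (θ : ℝ) :
    IsVertexCover G (thresholdRound C c θ) := by
  intro u v huv
  have := hc huv
  simp only [thresholdRound, mem_filter_univ]
  by_cases hu : θ ≤ c u <;> by_cases hv : θ ≤ c v <;> rcases hC huv with h | h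
  all_goals first
    | exact Or.inl (Or.inl ⟨h, hu⟩) | exact Or.inr (Or.inl ⟨h, hv⟩)
    | exact Or.inl (Or.inr (by linarith)) | exact Or.inr (Or.inr (by linarith))

noncomputable def thresholdRoundProb (c θ : ℝ) : ℝ :=
  if 1 - θ < c then 1 else if θ ≤ c then c else 0

lemma sum_ite_mem_thresholdRound [Fintype V] (hpsum : ∑ i, p i = 1)
    (hc : ∀ v, c v = ∑ i, if v ∈ C i then p i else 0) (v : V) (θ : ℝ) :
    ∑ i, (if v ∈ thresholdRound (C i) c θ then p i else 0) = thresholdRoundProb (c v) θ := by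
  simp only [thresholdRound, mem_filter_univ, thresholdRoundProb]
  split_ifs with hhigh hlow
  · simp [hhigh, hpsum]
  · simp only [hhigh, hlow, and_true, or_false]
    exact (hc v).symm
  · simp [hhigh, hlow]

end FractionalCover

noncomputable def thresholdCDF (β x : ℝ) : ℝ :=
  β / 2 / (1 - (2 - β) * x)

section ThresholdCDF

variable {β : ℝ}

lemma thresholdCDF_half (hβ : β ≠ 0) : thresholdCDF β (1 / 2) = 1 := by
  rw [thresholdCDF, div_eq_one_iff_eq] <;> [ring; (ring_nf; simpa using hβ)]

lemma thresholdCDF_denom_pos (hβ0 : 0 < β) (hβ2 : β ≤ 2) {x : ℝ} (hx : x ≤ 1 / 2) :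
    0 < 1 - (2 - β) * x := by
  nlinarith

lemma thresholdCDF_nonneg (hβ0 : 0 < β) (hβ2 : β ≤ 2) {x : ℝ} (hx : x ≤ 1 / 2) :
    0 ≤ thresholdCDF β x :=
  div_nonneg (by linarith) (thresholdCDF_denom_pos hβ0 hβ2 hx).le

lemma thresholdCDF_monotoneOn (hβ0 : 0 < β) (hβ2 : β ≤ 2) :
    MonotoneOn (thresholdCDF β) (Set.Iic (1 / 2)) :=
  fun x _ y hy hxy => div_le_div_of_nonneg_left (by linarith)
    (thresholdCDF_denom_pos hβ0 hβ2 hy) (by nlinarith)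

lemma mul_mul_thresholdCDF_of_le_half (hβ0 : 0 < β) (hβ2 : β ≤ 2) {c : ℝ} (hc : c ≤ 1 / 2) :
    (1 - (2 - β) * c) * (c * thresholdCDF β c) = β / 2 * c := by
  have := thresholdCDF_denom_pos hβ0 hβ2 hc
  rw [thresholdCDF]
  field_simp

lemma mul_one_sub_mul_thresholdCDF_le (hβ0 : 0 < β) (hβ2 : β ≤ 2) {c : ℝ} (hc : 1 / 2 < c) :
    (1 - (2 - β) * c) * (1 - (1 - c) * thresholdCDF β (1 - c)) ≤ β / 2 * c := by
  have hd := thresholdCDF_denom_pos hβ0 hβ2 (x := 1 - c) (by linarith)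
  have key : β / 2 * c - (1 - (2 - β) * c) * (1 - (1 - c) * thresholdCDF β (1 - c)) =
      (2 - β) / 2 * (2 * c - 1) ^ 2 / (1 - (2 - β) * (1 - c)) := by
    rw [thresholdCDF]
    field_simp
    ring
  rw [← sub_nonneg, key]
  exact div_nonneg (mul_nonneg (by linarith) (sq_nonneg _)) hd.le

end ThresholdCDF

section ThresholdRoundProb

variable {Θ : Finset ℝ} {μ : ℝ → ℝ} {c : ℝ}

lemma sum_mul_thresholdRoundProb_of_le_half (hΘ : ∀ θ ∈ Θ, θ ≤ 1 / 2) (hc : c ≤ 1 / 2) :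
    ∑ θ ∈ Θ, μ θ * thresholdRoundProb c θ = c * ∑ θ ∈ Θ with θ ≤ c, μ θ := by
  rw [sum_filter, mul_sum]
  refine sum_congr rfl fun θ hθ => ?_
  have := hΘ θ hθ
  rw [thresholdRoundProb, if_neg (by linarith)]
  split_ifs <;> ring

lemma sum_mul_thresholdRoundProb_of_half_lt (hΘ : ∀ θ ∈ Θ, θ ≤ 1 / 2) (hc : 1 / 2 < c) :
    ∑ θ ∈ Θ, μ θ * thresholdRoundProb c θ =
      ∑ θ ∈ Θ, μ θ - (1 - c) * ∑ θ ∈ Θ with θ ≤ 1 - c, μ θ := by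
  rw [sum_filter, mul_sum, ← sum_sub_distrib]
  refine sum_congr rfl fun θ hθ => ?_
  have := hΘ θ hθ
  by_cases h : θ ≤ 1 - c
  · rw [thresholdRoundProb, if_neg (by linarith), if_pos (by linarith), if_pos h]; ring
  · rw [thresholdRoundProb, if_pos (by linarith), if_neg h]; ring

lemma mul_sum_mul_thresholdRoundProb_le {β : ℝ} (hβ0 : 0 < β) (hβ2 : β ≤ 2)
    (hΘ : ∀ θ ∈ Θ, θ ≤ 1 / 2) (hμ : ∀ x ∈ Θ, ∑ θ ∈ Θ with θ ≤ x, μ θ = thresholdCDF β x)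
    (hmass : ∑ θ ∈ Θ, μ θ = 1) (hc : min c (1 - c) ∈ Θ) :
    (1 - (2 - β) * c) * ∑ θ ∈ Θ, μ θ * thresholdRoundProb c θ ≤ β / 2 * c := by
  rcases le_or_gt c (1 / 2) with hlow | hhigh
  · rw [min_eq_left (by linarith)] at hc
    rw [sum_mul_thresholdRoundProb_of_le_half hΘ hlow, hμ c hc,
      mul_mul_thresholdCDF_of_le_half hβ0 hβ2 hlow]
  · rw [min_eq_right (by linarith)] at hc
    rw [sum_mul_thresholdRoundProb_of_half_lt hΘ hhigh, hμ _ hc, hmass]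
    exact mul_one_sub_mul_thresholdCDF_le hβ0 hβ2 hhigh

end ThresholdRoundProb

theorem sum_weight_le_of_isMinWeightCover [Fintype V] [Fintype ι] [DecidableEq V]
    {G : SimpleGraph V} {β : ℝ} (hβ0 : 0 < β) (hβ2 : β ≤ 2) {p : ι → ℝ} (hp : ∀ i, 0 ≤ p i)
    (hpsum : ∑ i, p i = 1) {C : ι → Finset V} (hC : ∀ i, IsVertexCover G (C i)) {c : V → ℝ}
    (hc : ∀ v, c v = ∑ i, if v ∈ C i then p i else 0) {X : Finset V}
    (hXmin : ∀ Y, IsVertexCover G Y →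
      ∑ v ∈ X, (1 - (2 - β) * c v) ≤ ∑ v ∈ Y, (1 - (2 - β) * c v)) :
    ∑ v ∈ X, (1 - (2 - β) * c v) ≤ β / 2 * ∑ v, c v := by
  set Θ : Finset ℝ := insert (1 / 2) (univ.image fun v => min (c v) (1 - c v))
  have hΘ : ∀ θ ∈ Θ, θ ≤ 1 / 2 := by
    simp only [Θ, mem_insert, mem_image, mem_univ, true_and]
    rintro θ (rfl | ⟨v, rfl⟩)
    · exact le_rfl
    · linarith [min_le_left (c v) (1 - c v), min_le_right (c v) (1 - c v)]
  obtain ⟨μ, hμ0, hμ⟩ := Θ.exists_nonneg_sum_filter_le_eq (thresholdCDF β)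
    (fun x hx => thresholdCDF_nonneg hβ0 hβ2 (hΘ x hx))
    ((thresholdCDF_monotoneOn hβ0 hβ2).mono hΘ)
  have hmass : ∑ θ ∈ Θ, μ θ = 1 := by
    rw [← thresholdCDF_half hβ0.ne', ← hμ _ (mem_insert_self _ _), filter_true_of_mem hΘ]
  have hcover (k : ι × ℝ) : IsVertexCover G (thresholdRound (C k.1) c k.2) :=
    isVertexCover_thresholdRound (hC k.1)
      (fun _ _ huv => one_le_add_of_forall_isVertexCover hp hpsum hC hc huv) k.2
  calc ∑ v ∈ X, (1 - (2 - β) * c v)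
      ≤ ∑ v, (1 - (2 - β) * c v) * ∑ k ∈ univ ×ˢ Θ,
          if v ∈ thresholdRound (C k.1) c k.2 then p k.1 * μ k.2 else 0 := by
        refine le_sum_mul_sum_ite_of_forall_le _ _ (fun k hk => ?_) ?_ _ _
          fun k _ => hXmin _ (hcover k)
        · exact mul_nonneg (hp _) (hμ0 _ (mem_product.mp hk).2)
        · rw [sum_product, ← sum_mul_sum, hpsum, hmass, one_mul]
    _ = ∑ v, (1 - (2 - β) * c v) * ∑ θ ∈ Θ, μ θ * thresholdRoundProb (c v) θ := by
        refine sum_congr rfl fun v _ => ?_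
        rw [sum_product_right]
        congr 1
        refine sum_congr rfl fun θ _ => ?_
        rw [← sum_ite_mem_thresholdRound hpsum hc v θ, mul_sum]
        refine sum_congr rfl fun i _ => ?_
        rw [mul_ite, mul_zero, mul_comm]
    _ ≤ ∑ v, β / 2 * c v := sum_le_sum fun v _ =>
        mul_sum_mul_thresholdRoundProb_le hβ0 hβ2 hΘ hμ hmass
          (mem_insert_of_mem (mem_image_of_mem _ (mem_univ v)))
    _ = β / 2 * ∑ v, c v := (mul_sum _ _ _).symm

end

theorem stmt_3_general {V : Type*} [Fintype V] [DecidableEq V]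
    (G_A : SimpleGraph V) (β : ℝ) (hβ : β ∈ Set.Ioc (0 : ℝ) 1)
    (m : ℕ) (H : Fin m → SimpleGraph V) (p : Fin m → ℝ)
    (hp : ∀ i, 0 ≤ p i) (hpsum : ∑ i, p i = 1)
    (C : Fin m → Finset V)
    (hCcover : ∀ i, IsVertexCover (G_A ⊔ H i) (C i))
    (hCmin : ∀ i, (C i).card = tau (G_A ⊔ H i))
    (c : V → ℝ) (hc : ∀ v, c v = ∑ i, if v ∈ C i then p i else 0)
    (X : Finset V)
    (hXmin : ∀ Y : Finset V, IsVertexCover G_A Y →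
      ∑ v ∈ X, (1 - (2 - β) * c v) ≤ ∑ v ∈ Y, (1 - (2 - β) * c v)) :
    ∑ i, p i * ((X.card : ℝ) + (2 - β) * (tau (inducedOutside (H i) X) : ℝ)) ≤
      (2 - β / 2) * ∑ i, p i * (tau (G_A ⊔ H i) : ℝ) := by
  obtain ⟨hβ0, hβ1⟩ := hβ
  have hweight := sum_weight_le_of_isMinWeightCover hβ0 (by linarith) hp hpsum
    (fun i => (hCcover i).mono le_sup_left) hc hXmin
  have hτ : ∀ i, (tau (inducedOutside (H i) X) : ℝ) ≤ #(C i) - #(C i ∩ X) := fun i => by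
    rw [le_sub_iff_add_le]
    exact_mod_cast tau_inducedOutside_add_card_inter_le ((hCcover i).mono le_sup_right) X
  have htotal : ∑ i, p i * (#(C i) : ℝ) = ∑ v, c v := by
    simpa using sum_mul_card_inter_eq_sum hc univ
  calc ∑ i, p i * ((#X : ℝ) + (2 - β) * (tau (inducedOutside (H i) X) : ℝ))
      ≤ ∑ i, p i * ((#X : ℝ) + (2 - β) * (#(C i) - #(C i ∩ X))) := by
        gcongr with i
        · exact hp i
        · linarith
        · exact hτ i
    _ = ∑ v ∈ X, (1 - (2 - β) * c v) + (2 - β) * ∑ v, c v := by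
        simp only [mul_add, mul_sub, sum_add_distrib, sum_sub_distrib, ← sum_mul, hpsum,
          mul_left_comm (p _) (2 - β), ← mul_sum, htotal, sum_mul_card_inter_eq_sum hc X]
        simp only [one_mul, sum_const, nsmul_eq_mul, mul_one]
        ring
    _ ≤ β / 2 * ∑ v, c v + (2 - β) * ∑ v, c v := by gcongr
    _ = (2 - β / 2) * ∑ i, p i * (tau (G_A ⊔ H i) : ℝ) := by
        simp only [← hCmin, htotal]
        ring

/-- The main estimate in the proof of Lemma 3.2 of the paper: if `C i` is a minimum
vertex cover of `G_A ⊔ H i`, `c v` is the probability that `v` lies in the random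
minimum cover, and `X` is a vertex cover of `G_A` of minimum weight for the weights
`w v = 1 - (2-β)·c v`, then
`E[|X| + (2-β)·τ(H[V∖X])] ≤ (2-β/2)·E[τ(G_A ∪ H)]`. -/
theorem stmt_3 {V : Type*} [Fintype V] [DecidableEq V]
    (G_A : SimpleGraph V) (β : ℝ) (hβ : β ∈ Set.Ioc (0 : ℝ) 1)
    (m : ℕ) (H : Fin m → SimpleGraph V) (p : Fin m → ℝ)
    (hp : ∀ i, 0 ≤ p i) (hpsum : ∑ i, p i = 1)
    (C : Fin m → Finset V)
    (hCcover : ∀ i, IsVertexCover (G_A ⊔ H i) (C i))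
    (hCmin : ∀ i, (C i).card = tau (G_A ⊔ H i))
    (c : V → ℝ) (hc : ∀ v, c v = ∑ i, if v ∈ C i then p i else 0)
    (X : Finset V) (hX : IsVertexCover G_A X)
    (hXmin : ∀ Y : Finset V, IsVertexCover G_A Y →
      ∑ v ∈ X, (1 - (2 - β) * c v) ≤ ∑ v ∈ Y, (1 - (2 - β) * c v)) :
    ∑ i, p i * ((X.card : ℝ) + (2 - β) * (tau (inducedOutside (H i) X) : ℝ)) ≤
      (2 - β / 2) * ∑ i, p i * (tau (G_A ⊔ H i) : ℝ) :=
  stmt_3_general G_A β hβ m H p hp hpsum C hCcover hCmin c hc X hXmin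
end

section
/- Let A and B be nonempty finite sets, u : A × B → ℝ, and α ∈ ℝ. Suppose that for every probability vector q on B (i.e., q : B → ℝ with q(b) ≥ 0 for all b and ∑_{b∈B} q(b) = 1) there exists a ∈ A with ∑_{b∈B} q(b)·u(a,b) ≤ α. Then there exists a probability vector p on A such that for every b ∈ B, ∑_{a∈A} p(a)·u(a,b) ≤ α. -/
/-!
If no mixed strategy `p` of the minimizer keeps every payoff of `p ᵥ* M` at most `α`, the compact
convex set of payoff vectors `{p ᵥ* M | p ∈ stdSimplex}` misses the closed convex orthant
`{x | x ≤ α}`. A functional separating the two is bounded above on the orthant, so its weights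
`q` are nonnegative; normalized, `q` is a mixed strategy of the adversary against which every pure
response of the minimizer pays more than `α`.
-/

open Finset Matrix

lemma LinearMap.apply_eq_dotProduct_single {ι : Type*} [Fintype ι] [DecidableEq ι]
    (f : (ι → ℝ) →ₗ[ℝ] ℝ) (x : ι → ℝ) : f x = x ⬝ᵥ fun i => f (Pi.single i 1) := by
  conv_lhs => rw [pi_eq_sum_univ' x, map_sum]
  simp [dotProduct]

lemma LinearMap.single_nonneg_of_le_on_Iic {ι : Type*} [DecidableEq ι]
    (f : (ι → ℝ) →ₗ[ℝ] ℝ) {x₀ : ι → ℝ} {C : ℝ} (hf : ∀ x ≤ x₀, f x ≤ C) (i : ι) :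
    0 ≤ f (Pi.single i 1) := by
  by_contra! hneg
  have hx₀ : f x₀ ≤ C := hf x₀ le_rfl
  set t := (C - f x₀ + 1) / -f (Pi.single i 1)
  have ht : 0 ≤ t := div_nonneg (by linarith) (by linarith)
  have hle : x₀ - t • Pi.single i 1 ≤ x₀ :=
    sub_le_self _ (smul_nonneg ht (Pi.single_nonneg.2 zero_le_one))
  have hval : f (x₀ - t • Pi.single i 1) = C + 1 := by
    rw [map_sub, map_smul, smul_eq_mul, div_mul_eq_mul_div, div_neg,
      mul_div_cancel_right₀ _ hneg.ne]
    ring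
  linarith [hf _ hle]

lemma Matrix.exists_mulVec_le_mul_sum {A B : Type*} [Fintype B] (M : Matrix A B ℝ) {α : ℝ}
    (h : ∀ q ∈ stdSimplex ℝ B, ∃ a, (M *ᵥ q) a ≤ α) {q : B → ℝ} (hq : 0 ≤ q)
    (hQ : 0 < ∑ b, q b) : ∃ a, (M *ᵥ q) a ≤ α * ∑ b, q b := by
  obtain ⟨a, ha⟩ := h ((∑ b, q b)⁻¹ • q)
    ⟨fun b => mul_nonneg (inv_nonneg.2 hQ.le) (hq b), by simp [← mul_sum, hQ.ne']⟩
  refine ⟨a, ?_⟩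
  rw [mulVec_smul, Pi.smul_apply, smul_eq_mul, inv_mul_le_iff₀ hQ] at ha
  linarith

theorem Matrix.exists_mem_stdSimplex_vecMul_le {A B : Type*} [Fintype A] [Fintype B] [Nonempty A]
    (M : Matrix A B ℝ) (α : ℝ) (h : ∀ q ∈ stdSimplex ℝ B, ∃ a, (M *ᵥ q) a ≤ α) :
    ∃ p ∈ stdSimplex ℝ A, p ᵥ* M ≤ Function.const B α := by
  classical
  by_contra hcon
  have hdisj : Disjoint (Set.Iic (Function.const B α)) (M.vecMulLinear '' stdSimplex ℝ A) := by
    rw [Set.disjoint_right]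
    rintro _ ⟨p, hp, rfl⟩ hle
    exact hcon ⟨p, hp, hle⟩
  obtain ⟨f, c, d, hfT, hcd, hfS⟩ := geometric_hahn_banach_closed_compact (convex_Iic _)
    isClosed_Iic ((convex_stdSimplex ℝ A).linear_image _)
    ((isCompact_stdSimplex ℝ A).image M.vecMulLinear.continuous_of_finiteDimensional) hdisj
  set q : B → ℝ := fun b => f (Pi.single b 1)
  have hf : ∀ x, f x = x ⬝ᵥ q := f.toLinearMap.apply_eq_dotProduct_single
  have hq : 0 ≤ q := f.toLinearMap.single_nonneg_of_le_on_Iic fun x hx => (hfT x hx).le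
  have hrow : ∀ a, d < (M *ᵥ q) a := fun a => by
    have : d < f (Pi.single a 1 ᵥ* M) := hfS _ ⟨Pi.single a 1, single_mem_stdSimplex ℝ a, rfl⟩
    rwa [single_one_vecMul, hf] at this
  have hconst : α * ∑ b, q b < c := by
    simpa [hf, dotProduct, mul_sum] using hfT _ (Set.mem_Iic.2 le_rfl)
  obtain ⟨a₀⟩ := ‹Nonempty A›
  have hQ : 0 < ∑ b, q b := by
    refine (sum_nonneg fun b _ => hq b).lt_of_ne fun hQ => ?_
    have hq0 : q = 0 := (Fintype.sum_eq_zero_iff_of_nonneg hq).1 hQ.symm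
    have hd := hrow a₀
    simp only [hq0, mulVec_zero, Pi.zero_apply, sum_const_zero, mul_zero] at hd hconst
    linarith
  obtain ⟨a, ha⟩ := M.exists_mulVec_le_mul_sum h hq hQ
  linarith [hrow a]

theorem stmt_6_general {A B : Type*} [Fintype A] [Fintype B] [Nonempty A]
    (u : A × B → ℝ) (α : ℝ)
    (h : ∀ q : B → ℝ, (∀ b, 0 ≤ q b) → (∑ b, q b = 1) →
      ∃ a : A, ∑ b, q b * u (a, b) ≤ α) :
    ∃ p : A → ℝ, (∀ a, 0 ≤ p a) ∧ (∑ a, p a = 1) ∧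
      ∀ b : B, ∑ a, p a * u (a, b) ≤ α := by
  obtain ⟨p, ⟨hp_nonneg, hp_sum⟩, hp⟩ :=
    (Matrix.of fun a b => u (a, b)).exists_mem_stdSimplex_vecMul_le α fun q ⟨hq, hq_sum⟩ => by
      simpa only [mulVec, dotProduct, of_apply, mul_comm] using h q hq hq_sum
  exact ⟨p, hp_nonneg, hp_sum, hp⟩

/-- The consequence of von Neumann's Minimax Theorem for finite two-player zero-sum
games used in the paper (Proposition 2.1 / Lemma 3.3): if for every mixed strategy
`q` of the adversary (over `B`) the minimizing player has a pure response `a ∈ A`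
achieving expected utility at most `α`, then the minimizing player has a mixed
strategy `p` (over `A`) guaranteeing expected utility at most `α` against every pure
adversary strategy `b ∈ B`. -/
theorem stmt_6 {A B : Type*} [Fintype A] [Fintype B] [Nonempty A] [Nonempty B]
    (u : A × B → ℝ) (α : ℝ)
    (h : ∀ q : B → ℝ, (∀ b, 0 ≤ q b) → (∑ b, q b = 1) →
      ∃ a : A, ∑ b, q b * u (a, b) ≤ α) :
    ∃ p : A → ℝ, (∀ a, 0 ≤ p a) ∧ (∑ a, p a = 1) ∧
      ∀ b : B, ∑ a, p a * u (a, b) ≤ α :=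
  stmt_6_general u α h
end

section
/- Let G be a graph on a finite vertex set V, let c : V → ℝ satisfy 0 ≤ c_v ≤ 1 for all v and c_u + c_v ≥ 1 for every edge {u,v} of G, let t ∈ [1/2, 1], and let C be a vertex cover of G. Then the set I = {v ∈ V : c_v > t} ∪ {v ∈ C : 1 − t ≤ c_v ≤ t} is a vertex cover of G. -/
open Classical in
/-- The implicit claim in the proof of Lemma 3.5 of the paper: if `0 ≤ c_v ≤ 1`,
`c_u + c_v ≥ 1` for every edge `{u,v}` of `G`, `t ∈ [1/2,1]`, and `C` is a vertex
cover of `G`, then the set of all vertices with `c_v > t` together with the vertices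
of `C` with `1 - t ≤ c_v ≤ t` is a vertex cover of `G`. -/
theorem stmt_9 {V : Type*} [Fintype V] [DecidableEq V]
    (G : SimpleGraph V) (c : V → ℝ)
    (hc01 : ∀ v, 0 ≤ c v ∧ c v ≤ 1)
    (hedge : ∀ ⦃u v : V⦄, G.Adj u v → 1 ≤ c u + c v)
    (t : ℝ) (ht : t ∈ Set.Icc (1/2 : ℝ) 1)
    (C : Finset V) (hC : IsVertexCover G C) :
    IsVertexCover G
      ((Finset.univ.filter fun v => t < c v) ∪
        (C.filter fun v => 1 - t ≤ c v ∧ c v ≤ t)) := by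
  intro u v h
  have he := hedge h
  by_cases hu : t < c u
  · exact Or.inl (Finset.mem_union_left _ (Finset.mem_filter.mpr ⟨Finset.mem_univ _, hu⟩))
  by_cases hv : t < c v
  · exact Or.inr (Finset.mem_union_left _ (Finset.mem_filter.mpr ⟨Finset.mem_univ _, hv⟩))
  push_neg at hu hv
  have hu' : 1 - t ≤ c u := by linarith
  have hv' : 1 - t ≤ c v := by linarith
  rcases hC h with hcu | hcv
  · exact Or.inl (Finset.mem_union_right _ (Finset.mem_filter.mpr ⟨hcu, hu', hu⟩))
  · exact Or.inr (Finset.mem_union_right _ (Finset.mem_filter.mpr ⟨hcv, hv', hv⟩))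
end

section
/- Let a, a', r, k, m be natural numbers with 1 ≤ r ≤ a' < a. Let A_1, …, A_k be finite sets each of cardinality a, and let 𝓕 be a nonempty set of k-tuples (S_1, …, S_k) where each S_i ⊆ A_i has cardinality exactly r. For each i let m_i = |⋃_{(S_1,…,S_k) ∈ 𝓕} S_i|, and let I = {i ∈ {1,…,k} : m_i > a'}. If |𝓕| ≥ C(a, r)^k · (a'/a)^{r·m} (as real numbers), then |I| ≥ k − m. -/
lemma descFact_ratio (a a' : ℕ) (h : a' ≤ a) :
    ∀ r, a'.descFactorial r * a ^ r ≤ a.descFactorial r * a' ^ r := by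
  intro r
  induction r with
  | zero => simp
  | succ r ih =>
    rw [Nat.descFactorial_succ, Nat.descFactorial_succ, pow_succ, pow_succ]
    calc (a' - r) * a'.descFactorial r * (a ^ r * a)
        = ((a' - r) * a) * (a'.descFactorial r * a ^ r) := by ring
      _ ≤ ((a - r) * a') * (a.descFactorial r * a' ^ r) := by
          refine Nat.mul_le_mul ?_ ih
          calc (a' - r) * a = a' * a - r * a := by rw [Nat.sub_mul]
            _ ≤ a * a' - r * a' := by
                rw [mul_comm a' a]
                exact Nat.sub_le_sub_left (Nat.mul_le_mul_left r h) _
            _ = (a - r) * a' := by rw [Nat.sub_mul]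
      _ = (a - r) * a.descFactorial r * (a' ^ r * a') := by ring

lemma choose_ratio (a a' r : ℕ) (h : a' ≤ a) :
    a'.choose r * a ^ r ≤ a.choose r * a' ^ r := by
  have := descFact_ratio a a' h r
  rw [Nat.descFactorial_eq_factorial_mul_choose, Nat.descFactorial_eq_factorial_mul_choose] at this
  rw [mul_assoc, mul_assoc] at this
  exact Nat.le_of_mul_le_mul_left this (Nat.factorial_pos r)

open Classical in
/-- The quantitative core of Lemma 5.2 of the paper: if `𝓕` is a nonempty family of
`k`-tuples of `r`-subsets of ground sets `A i` of size `a`, if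
`(𝓕.card : ℝ) ≥ C(a,r)^k · (a'/a)^{r·m}`, and `m i` denotes the size of the union of
the `i`-th components over `𝓕`, then the set `I` of indices `i` with `m i > a'` has
size at least `k - m`. -/
theorem stmt_10 {α : Type*} [DecidableEq α] (a a' r k m : ℕ)
    (hr : 1 ≤ r) (hra' : r ≤ a') (ha' : a' < a)
    (A : Fin k → Finset α) (hA : ∀ i, (A i).card = a)
    (𝓕 : Finset (Fin k → Finset α)) (h𝓕ne : 𝓕.Nonempty)
    (h𝓕 : ∀ S ∈ 𝓕, ∀ i, S i ⊆ A i ∧ (S i).card = r)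
    (hbig : ((Nat.choose a r : ℝ)) ^ k * ((a' : ℝ) / (a : ℝ)) ^ (r * m) ≤ (𝓕.card : ℝ)) :
    k - m ≤ (Finset.univ.filter
      (fun i : Fin k => a' < (𝓕.biUnion (fun S => S i)).card)).card := by
  set U : Fin k → Finset α := fun i => 𝓕.biUnion (fun S => S i) with hU
  set I : Finset (Fin k) := Finset.univ.filter (fun i => a' < (U i).card) with hI
  -- card of 𝓕 bounded by product of choose (card (U i)) r
  have hsub : 𝓕 ⊆ Fintype.piFinset (fun i => (U i).powersetCard r) := by
    intro S hS
    rw [Fintype.mem_piFinset]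
    intro i
    rw [Finset.mem_powersetCard]
    exact ⟨Finset.subset_biUnion_of_mem (fun S => S i) hS, (h𝓕 S hS i).2⟩
  have hcard1 : 𝓕.card ≤ ∏ i : Fin k, ((U i).card).choose r := by
    calc 𝓕.card ≤ (Fintype.piFinset (fun i => (U i).powersetCard r)).card :=
          Finset.card_le_card hsub
      _ = ∏ i : Fin k, ((U i).powersetCard r).card := Fintype.card_piFinset _
      _ = ∏ i : Fin k, ((U i).card).choose r := by
          simp [Finset.card_powersetCard]
  have hUa : ∀ i, (U i).card ≤ a := by
    intro i
    have : U i ⊆ A i := by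
      intro x hx
      rw [hU] at hx
      simp only [Finset.mem_biUnion] at hx
      obtain ⟨S, hS, hxS⟩ := hx
      exact (h𝓕 S hS i).1 hxS
    simpa [hA i] using Finset.card_le_card this
  -- product bound
  have hcard2 : (∏ i : Fin k, ((U i).card).choose r) ≤
      a.choose r ^ I.card * a'.choose r ^ Iᶜ.card := by
    rw [← Finset.prod_filter_mul_prod_filter_not Finset.univ (fun i => a' < (U i).card)]
    have h1 : (∏ i ∈ I, ((U i).card).choose r) ≤ ∏ _i ∈ I, a.choose r :=
      Finset.prod_le_prod' (fun i _ => Nat.choose_le_choose r (hUa i))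
    have h2 : (∏ i ∈ Iᶜ, ((U i).card).choose r) ≤ ∏ _i ∈ Iᶜ, a'.choose r := by
      refine Finset.prod_le_prod' (fun i hi => Nat.choose_le_choose r ?_)
      rw [hI] at hi
      simp only [Finset.mem_compl, Finset.mem_filter, Finset.mem_univ, true_and,
        not_lt] at hi
      exact hi
    have hIc : Finset.univ.filter (fun i => ¬ a' < (U i).card) = Iᶜ := by
      ext i; simp [hI]
    rw [hIc]
    calc (∏ i ∈ I, ((U i).card).choose r) * ∏ i ∈ Iᶜ, ((U i).card).choose r
        ≤ (∏ _i ∈ I, a.choose r) * ∏ _i ∈ Iᶜ, a'.choose r := Nat.mul_le_mul h1 h2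
      _ = a.choose r ^ I.card * a'.choose r ^ Iᶜ.card := by
          rw [Finset.prod_const, Finset.prod_const]
  -- now in reals
  set t := Iᶜ.card with ht
  have hIt : I.card + t = k := by
    rw [ht]
    simpa using Finset.card_add_card_compl I
  have ha0 : (0:ℝ) < a := by exact_mod_cast Nat.zero_lt_of_lt ha'
  have ha'0 : (0:ℝ) < (a':ℝ) := by exact_mod_cast lt_of_lt_of_le hr hra'
  have hx0 : (0:ℝ) < (a':ℝ)/(a:ℝ) := div_pos ha'0 ha0
  have hx1 : ((a':ℝ)/(a:ℝ)) < 1 := by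
    rw [div_lt_one ha0]; exact_mod_cast ha'
  have hch0 : (0:ℝ) < (a.choose r : ℝ) := by
    exact_mod_cast Nat.choose_pos (le_of_lt (lt_of_le_of_lt hra' ha'))
  -- choose ratio in reals
  have hratio : (a'.choose r : ℝ) ≤ (a.choose r : ℝ) * ((a':ℝ)/(a:ℝ)) ^ r := by
    have := choose_ratio a a' r (le_of_lt ha')
    have hcast : (a'.choose r : ℝ) * (a:ℝ) ^ r ≤ (a.choose r : ℝ) * (a':ℝ) ^ r := by
      exact_mod_cast this
    rw [div_pow, ← mul_div_assoc, le_div_iff₀ (by positivity)]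
    linarith [hcast]
  have hchain : ((Nat.choose a r : ℝ)) ^ k * ((a' : ℝ) / (a : ℝ)) ^ (r * m) ≤
      ((Nat.choose a r : ℝ)) ^ k * (((a' : ℝ) / (a : ℝ)) ^ r) ^ t := by
    calc ((Nat.choose a r : ℝ)) ^ k * ((a' : ℝ) / (a : ℝ)) ^ (r * m)
        ≤ (𝓕.card : ℝ) := hbig
      _ ≤ ((∏ i : Fin k, ((U i).card).choose r : ℕ) : ℝ) := by exact_mod_cast hcard1
      _ ≤ ((a.choose r ^ I.card * a'.choose r ^ t : ℕ) : ℝ) := by exact_mod_cast hcard2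
      _ = (a.choose r : ℝ) ^ I.card * (a'.choose r : ℝ) ^ t := by push_cast; ring
      _ ≤ (a.choose r : ℝ) ^ I.card *
          ((a.choose r : ℝ) * ((a':ℝ)/(a:ℝ)) ^ r) ^ t := by
          refine mul_le_mul_of_nonneg_left ?_ (by positivity)
          refine pow_le_pow_left₀ ?_ hratio t
          positivity
      _ = ((Nat.choose a r : ℝ)) ^ k * (((a' : ℝ) / (a : ℝ)) ^ r) ^ t := by
          rw [mul_pow, ← mul_assoc, ← pow_add, hIt]
  have hxm : ((a' : ℝ) / (a : ℝ)) ^ (r * m) ≤ ((a' : ℝ) / (a : ℝ)) ^ (r * t) := by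
    have h2 : ((a':ℝ)/(a:ℝ)) ^ (r*m) ≤ (((a':ℝ)/(a:ℝ)) ^ r) ^ t :=
      le_of_mul_le_mul_left hchain (by positivity)
    rwa [← pow_mul] at h2
  have htm : t ≤ m := by
    by_contra hc
    push_neg at hc
    have : r * m < r * t := (Nat.mul_lt_mul_left hr).mpr hc
    have := pow_lt_pow_right_of_lt_one₀ hx0 hx1 this
    linarith
  omega
end
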